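/- Let λ ∈ (0,1), let f : (0,∞) → ℝ be differentiable, and let g : (0,∞) → ℝ. Assume that for every R > 0: (i) f(R) ≤ R·g(R); (ii) g(R) ≤ f′(R); (iii) g is integrable on the interval (0,R] and f(R) ≥ ∫₀^R g(r) dr; and (iv) g(λR) = g(R). Then there exists a constant c ∈ ℝ such that g(R) = c and f(R) = c·R for every R > 0. -/

import Mathlib

/-!
Put `φ R = f R / R`. The cone inequality gives `φ ≤ g`, and together with `g ≤ f'` it makes
`φ' = (R f' - f) / R² ≥ 0`, so `φ` is nondecreasing. Moving a radius `r` outwards by powers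
of `1/λ` past `t` does not change `g`, so `g r ≥ φ t` for all `r, t > 0`. Integrating over
`(0, R]` gives `f R ≥ R φ t`, i.e. `φ R ≥ φ t`, so `φ` is a constant `c`. Then `f R = c R`,
so `c = φ R ≤ g R ≤ f' R = c`.
-/

open MeasureTheory Set

theorem monotoneOn_div_self_of_le_mul_deriv {f : ℝ → ℝ}
    (hdiff : ∀ R, 0 < R → DifferentiableAt ℝ f R)
    (hle : ∀ R, 0 < R → f R ≤ R * deriv f R) :
    MonotoneOn (fun R => f R / R) (Ioi 0) := by
  have hdiv : ∀ R ∈ Ioi (0 : ℝ), DifferentiableAt ℝ (fun R => f R / R) R := fun R hR =>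
    (hdiff R hR).div differentiableAt_id hR.ne'
  refine monotoneOn_of_deriv_nonneg (convex_Ioi 0)
    (fun R hR => (hdiv R hR).continuousAt.continuousWithinAt) ?_ ?_
  · rw [interior_Ioi]
    exact fun R hR => (hdiv R hR).differentiableWithinAt
  · rw [interior_Ioi]
    intro R hR
    rw [deriv_fun_div (hdiff R hR) differentiableAt_fun_id hR.ne', deriv_id'', mul_one]
    exact div_nonneg (by linarith [hle R hR, mul_comm R (deriv f R)]) (sq_nonneg R)

theorem apply_pow_mul_of_apply_mul_eq {g : ℝ → ℝ} {l : ℝ} (hl : 0 < l)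
    (hdil : ∀ R, 0 < R → g (l * R) = g R) (n : ℕ) {R : ℝ} (hR : 0 < R) :
    g (l ^ n * R) = g R := by
  induction n with
  | zero => simp
  | succ n ih => rw [pow_succ', mul_assoc, hdil _ (by positivity), ih]

theorem le_of_monotoneOn_of_le_of_apply_mul_eq {φ g : ℝ → ℝ} {l : ℝ} (hl0 : 0 < l) (hl1 : l < 1)
    (hmono : MonotoneOn φ (Ioi 0)) (hφg : ∀ R, 0 < R → φ R ≤ g R)
    (hdil : ∀ R, 0 < R → g (l * R) = g R) {r t : ℝ} (hr : 0 < r) (ht : 0 < t) :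
    φ t ≤ g r := by
  obtain ⟨n, hn⟩ := exists_pow_lt_of_lt_one (div_pos hr ht) hl1
  have hln : 0 < l ^ n := pow_pos hl0 n
  have hr' : 0 < r / l ^ n := div_pos hr hln
  calc φ t ≤ φ (r / l ^ n) := hmono ht hr' ((le_div_iff₀' hln).2 ((lt_div_iff₀ ht).1 hn).le)
    _ ≤ g (r / l ^ n) := hφg _ hr'
    _ = g r := by
      rw [← apply_pow_mul_of_apply_mul_eq hl0 hdil n hr', mul_div_cancel₀ _ hln.ne']

theorem mul_le_setIntegral_Ioc_of_le {g : ℝ → ℝ} {c R : ℝ} (hR : 0 < R)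
    (hg : IntegrableOn g (Ioc 0 R)) (hc : ∀ r ∈ Ioc 0 R, c ≤ g r) :
    c * R ≤ ∫ r in Ioc 0 R, g r := by
  have := setIntegral_ge_of_const_le_real measurableSet_Ioc (by simp [Real.volume_Ioc]) hc hg
  rwa [Measure.real, Real.volume_Ioc, sub_zero, ENNReal.toReal_ofReal hR.le] at this

/-- The analytic core of the existence of horizontal tangent cones: if `f` is
differentiable on `(0, ∞)`, `f R ≤ R * g R` (cone comparison), `g R ≤ f' R`
(slicing), `g` is integrable on `(0, R]` with `∫₀^R g ≤ f R`, and `g` is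
invariant under dilation by some `λ ∈ (0,1)`, then `g` is a constant `c` on
`(0, ∞)` and `f R = c * R` there. -/
theorem projected_mass_constant (l : ℝ) (hl0 : 0 < l) (hl1 : l < 1)
    (f g : ℝ → ℝ)
    (hdiff : ∀ R : ℝ, 0 < R → DifferentiableAt ℝ f R)
    (hcone : ∀ R : ℝ, 0 < R → f R ≤ R * g R)
    (hslice : ∀ R : ℝ, 0 < R → g R ≤ deriv f R)
    (hint : ∀ R : ℝ, 0 < R → IntegrableOn g (Set.Ioc 0 R) ∧
      (∫ r in Set.Ioc (0 : ℝ) R, g r) ≤ f R)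
    (hdil : ∀ R : ℝ, 0 < R → g (l * R) = g R) :
    ∃ c : ℝ, ∀ R : ℝ, 0 < R → g R = c ∧ f R = c * R := by
  set φ : ℝ → ℝ := fun R => f R / R
  have hφg : ∀ R, 0 < R → φ R ≤ g R := fun R hR =>
    (div_le_iff₀ hR).2 (by linarith [hcone R hR, mul_comm R (g R)])
  have hmono : MonotoneOn φ (Ioi 0) := monotoneOn_div_self_of_le_mul_deriv hdiff fun R hR =>
    (hcone R hR).trans (mul_le_mul_of_nonneg_left (hslice R hR) hR.le)
  have hφ_le : ∀ R t, 0 < R → 0 < t → φ t ≤ φ R := fun R t hR ht =>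
    (le_div_iff₀ hR).2 <| (mul_le_setIntegral_Ioc_of_le hR (hint R hR).1 fun r hr =>
      le_of_monotoneOn_of_le_of_apply_mul_eq hl0 hl1 hmono hφg hdil hr.1 ht).trans (hint R hR).2
  have hf : ∀ R, 0 < R → f R = φ 1 * R := fun R hR => by
    rw [le_antisymm (hφ_le R 1 hR one_pos) (hφ_le 1 R one_pos hR)]
    exact (div_mul_cancel₀ _ hR.ne').symm
  refine ⟨φ 1, fun R hR => ⟨le_antisymm ?_ ?_, hf R hR⟩⟩
  · have hderiv : HasDerivAt f (φ 1) R :=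
      ((hasDerivAt_id R).const_mul (φ 1)).congr_of_eventuallyEq
        (eventually_gt_nhds hR |>.mono hf) |>.congr_deriv (mul_one _)
    exact hderiv.deriv ▸ hslice R hR
  · exact (hφ_le R 1 hR one_pos).trans (hφg R hR)
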